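/- arXiv:1909.12712 — 2 statements merged into one kernel-verified Lean document; each statement's English description precedes it below -/
import Mathlib

section
/- Let R be a semiprime ring, I an ideal of R, c ∈ I regular in I, and M = ann_R(I). Then the image of c in the quotient ring R/M is a regular element (non-zero-divisor) of R/M. -/
/-!
In a semiprime ring the left and right annihilators of a two-sided ideal `I` coincide: if
`r I = 0` then `(a r) R (a r) ⊆ a (r I) r = 0` for `a ∈ I`, so `a r = 0`. Hence `ann_R(I)` is the
left (equally, the right) annihilator of `I`, and `c r I = 0` forces `r I = 0` because `r I ⊆ I`
and `c` is regular in `I`; symmetrically on the other side.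
-/

def IsSemiprimeRing (R : Type*) [Ring R] : Prop :=
  ∀ a : R, (∀ r : R, a * r * a = 0) → a = 0

def leftAnn {R : Type*} [Ring R] (A : Set R) : Set R := {r | ∀ a ∈ A, r * a = 0}

def rightAnn {R : Type*} [Ring R] (A : Set R) : Set R := {r | ∀ a ∈ A, a * r = 0}

def twoAnn {R : Type*} [Ring R] (A : Set R) : Set R := leftAnn A ∩ rightAnn A

def RegularIn {R : Type*} [Ring R] (c : R) (A : Set R) : Prop :=
  ∀ s ∈ A, s ≠ 0 → c * s ≠ 0 ∧ s * c ≠ 0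

namespace IsSemiprimeRing

variable {R : Type*} [Ring R]

theorem leftAnn_subset_rightAnn (hsp : IsSemiprimeRing R) (I : TwoSidedIdeal R) :
    leftAnn (I : Set R) ⊆ rightAnn (I : Set R) := by
  intro r hr a ha
  refine hsp _ fun x => ?_
  calc a * r * x * (a * r) = a * (r * (x * a)) * r := by noncomm_ring
    _ = 0 := by rw [hr _ (I.mul_mem_left x a ha), mul_zero, zero_mul]

theorem rightAnn_subset_leftAnn (hsp : IsSemiprimeRing R) (I : TwoSidedIdeal R) :
    rightAnn (I : Set R) ⊆ leftAnn (I : Set R) := by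
  intro r hr a ha
  refine hsp _ fun x => ?_
  calc r * a * x * (r * a) = r * (a * x * r) * a := by noncomm_ring
    _ = 0 := by rw [hr _ (I.mul_mem_right a x ha), mul_zero, zero_mul]

theorem twoAnn_eq_leftAnn (hsp : IsSemiprimeRing R) (I : TwoSidedIdeal R) :
    twoAnn (I : Set R) = leftAnn (I : Set R) :=
  Set.inter_eq_left.mpr (hsp.leftAnn_subset_rightAnn I)

theorem twoAnn_eq_rightAnn (hsp : IsSemiprimeRing R) (I : TwoSidedIdeal R) :
    twoAnn (I : Set R) = rightAnn (I : Set R) :=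
  Set.inter_eq_right.mpr (hsp.rightAnn_subset_leftAnn I)

end IsSemiprimeRing

namespace RegularIn

variable {R : Type*} [Ring R] {I : TwoSidedIdeal R} {c : R}

theorem mem_leftAnn_of_mul_mem_leftAnn (hreg : RegularIn c (I : Set R)) {r : R}
    (hr : c * r ∈ leftAnn (I : Set R)) : r ∈ leftAnn (I : Set R) := by
  intro a ha
  by_contra hra
  exact (hreg _ (I.mul_mem_left r a ha) hra).1 (by rw [← mul_assoc]; exact hr a ha)

theorem mem_rightAnn_of_mul_mem_rightAnn (hreg : RegularIn c (I : Set R)) {r : R}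
    (hr : r * c ∈ rightAnn (I : Set R)) : r ∈ rightAnn (I : Set R) := by
  intro a ha
  by_contra har
  exact (hreg _ (I.mul_mem_right a r ha) har).2 (by rw [mul_assoc]; exact hr a ha)

end RegularIn

theorem stmt1_general {R : Type*} [Ring R] (hsp : IsSemiprimeRing R)
    (I : TwoSidedIdeal R) (c : R) (hreg : RegularIn c (I : Set R))
    (M : Set R) (hM : M = twoAnn (I : Set R)) :
    (∀ r : R, c * r ∈ M → r ∈ M) ∧ (∀ r : R, r * c ∈ M → r ∈ M) := by
  constructor
  · rw [hM, hsp.twoAnn_eq_leftAnn I]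
    exact fun r => hreg.mem_leftAnn_of_mul_mem_leftAnn
  · rw [hM, hsp.twoAnn_eq_rightAnn I]
    exact fun r => hreg.mem_rightAnn_of_mul_mem_rightAnn

/-- the image of `c` in `R/M` (where `M = ann_R(I)`) is a regular element of
`R/M`, i.e. it is neither a left nor a right zero divisor modulo `M`. -/
theorem stmt1 {R : Type*} [Ring R] (hsp : IsSemiprimeRing R)
    (I : TwoSidedIdeal R) (c : R) (hc : c ∈ I) (hreg : RegularIn c (I : Set R))
    (M : Set R) (hM : M = twoAnn (I : Set R)) :
    (∀ r : R, c * r ∈ M → r ∈ M) ∧ (∀ r : R, r * c ∈ M → r ∈ M) :=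
  stmt1_general hsp I c hreg M hM
end

section
/- Let R be a semiprime left Goldie ring and S = R[X; 𝒢, 𝒟] a free skew extension of R, where all σ_x are automorphisms. Let A be a nonzero two-sided ideal of S and let I be the additive subgroup of R generated by the leading coefficients (with respect to a fixed monomial order extending degree) of nonzero elements of A. Then I is a two-sided ideal of R. -/
def IsSkewDerivation {R : Type*} [Ring R] (σ : R →+* R) (δ : R →+ R) : Prop :=
  ∀ a b : R, δ (a * b) = δ a * b + σ a * δ b

/-- `S` (together with the embedding `ι : R → S` and `j : X → S`) is a free skew extension
`R[X; 𝒢, 𝒟]`: it contains `R` via `ι`, satisfies the skew relations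
`x·r = σₓ(r)·x + δₓ(r)`, and is a free left `R`-module with basis the free monoid on `X`
(every element has a unique representation as a finite left `R`-combination of monomials). -/
def IsFreeSkewExtension (R : Type*) [Ring R] (X : Type*) (σ : X → R →+* R)
    (δ : X → R →+ R) (S : Type*) [Ring S] (ι : R →+* S) (j : X → S) : Prop :=
  Function.Injective ι ∧
  (∀ (x : X) (r : R), j x * ι r = ι (σ x r) * j x + ι (δ x r)) ∧
  ∀ s : S, ∃! c : FreeMonoid X →₀ R,
    s = c.sum fun w r => ι r * FreeMonoid.lift j w

def AccLeftAnnihilators (R : Type*) [Ring R] : Prop :=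
  ∀ f : ℕ → Set R, (∀ n, ∃ A : Set R, f n = leftAnn A) → (∀ n, f n ⊆ f (n + 1)) →
    ∃ n, ∀ m, n ≤ m → f m = f n

/-- `R` contains no infinite direct sum of nonzero left ideals. -/
def NoInfiniteDirectSumOfLeftIdeals (R : Type*) [Ring R] : Prop :=
  ¬ ∃ f : ℕ → Ideal R, (∀ n, f n ≠ ⊥) ∧ iSupIndep f

/-- `R` is a left Goldie ring. -/
def IsLeftGoldie (R : Type*) [Ring R] : Prop :=
  NoInfiniteDirectSumOfLeftIdeals R ∧ AccLeftAnnihilators R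

/-- The set of leading coefficients (w.r.t. the order on monomials) of the nonzero
elements of a subset `A` of the free skew extension. -/
def LeadingCoeffSet {R : Type*} [Ring R] {X : Type*} [LinearOrder (FreeMonoid X)]
    {S : Type*} [Ring S] (ι : R →+* S) (j : X → S) (A : Set S) : Set R :=
  {r | ∃ s ∈ A, ∃ c : FreeMonoid X →₀ R,
    s = c.sum (fun w a => ι a * FreeMonoid.lift j w) ∧
    ∃ w ∈ c.support, (∀ v ∈ c.support, v ≤ w) ∧ r = c w}

/-!
If `s ∈ A` has leading term `r w`, then `ι a * s ∈ A` has leading term `(a r) w`, and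
`s * ι b ∈ A` has leading term `(r π_w(b)) w`, because `w b = π_w(b) w + (lower terms)` with
`π_{x₁⋯xₙ} = σ_{x₁} ∘ ⋯ ∘ σ_{xₙ}`. Since `π_w` is surjective, every nonzero `a r` and `r a` is
again a leading coefficient, so the additive group generated by them is a two-sided ideal.
-/

section MonomialSum

variable {R : Type*} [Ring R] {X : Type*} {S : Type*} [Ring S] (ι : R →+* S) (j : X → S)

noncomputable def monomialSum : (FreeMonoid X →₀ R) →+ S :=
  Finsupp.liftAddHom fun w => (AddMonoidHom.mulRight (FreeMonoid.lift j w)).comp ι.toAddMonoidHom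

theorem monomialSum_apply (c : FreeMonoid X →₀ R) :
    monomialSum ι j c = c.sum fun w a => ι a * FreeMonoid.lift j w :=
  Finsupp.liftAddHom_apply _ c

theorem monomialSum_single (w : FreeMonoid X) (a : R) :
    monomialSum ι j (Finsupp.single w a) = ι a * FreeMonoid.lift j w :=
  Finsupp.liftAddHom_apply_single _ w a

end MonomialSum

theorem FreeMonoid.lift_surjective_of_forall_surjective {R : Type*} [Ring R] {X : Type*}
    {σ : X → R →+* R} (hσ : ∀ x, Function.Surjective (σ x)) (w : FreeMonoid X) :
    Function.Surjective (FreeMonoid.lift σ w) := by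
  induction w using FreeMonoid.inductionOn' with
  | one => exact Function.surjective_id
  | of_mul x w ih =>
    rw [map_mul, FreeMonoid.lift_eval_of, RingHom.coe_mul]
    exact (hσ x).comp ih

theorem AddSubgroup.apply_mem_closure {G : Type*} [AddGroup G] {T : Set G} (f : G →+ G)
    (hf : ∀ t ∈ T, f t = 0 ∨ f t ∈ T) {g : G} (hg : g ∈ AddSubgroup.closure T) :
    f g ∈ AddSubgroup.closure T := by
  refine (AddSubgroup.closure_le ((AddSubgroup.closure T).comap f)).mpr (fun t ht => ?_) hg
  rcases hf t ht with h | h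
  · simp [h]
  · exact AddSubgroup.subset_closure h

section BoundedWithCoeff

variable {R : Type*} [Ring R] {X : Type*} [LinearOrder (FreeMonoid X)] {S : Type*} [Ring S]
  (ι : R →+* S) (j : X → S)

/-- For `r ≠ 0`, `r` is the leading coefficient of `s` at the monomial `w`; with `r = 0`, `s` lies
below `w`. -/
def BoundedWithCoeff (w : FreeMonoid X) (r : R) (s : S) : Prop :=
  ∃ c : FreeMonoid X →₀ R, s = monomialSum ι j c ∧ (∀ v ∈ c.support, v ≤ w) ∧ c w = r

variable {ι j}

namespace BoundedWithCoeff

theorem zero (w : FreeMonoid X) : BoundedWithCoeff ι j w 0 (0 : S) :=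
  ⟨0, by simp⟩

theorem monomial (w : FreeMonoid X) (r : R) :
    BoundedWithCoeff ι j w r (ι r * FreeMonoid.lift j w) := by
  refine ⟨Finsupp.single w r, (monomialSum_single ι j w r).symm, fun v hv => ?_, by simp⟩
  rw [Finset.mem_singleton.mp (Finsupp.support_single_subset hv)]

theorem add {w : FreeMonoid X} {r r' : R} {s s' : S} (h : BoundedWithCoeff ι j w r s)
    (h' : BoundedWithCoeff ι j w r' s') : BoundedWithCoeff ι j w (r + r') (s + s') := by
  obtain ⟨c, rfl, hc, rfl⟩ := h
  obtain ⟨c', rfl, hc', rfl⟩ := h'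
  classical
  refine ⟨c + c', (map_add _ c c').symm, fun v hv => ?_, rfl⟩
  rcases Finset.mem_union.mp (Finsupp.support_add hv) with hv | hv
  exacts [hc v hv, hc' v hv]

theorem of_lt {v w : FreeMonoid X} {r : R} {s : S} (hvw : v < w)
    (h : BoundedWithCoeff ι j v r s) : BoundedWithCoeff ι j w 0 s := by
  obtain ⟨c, rfl, hc, -⟩ := h
  refine ⟨c, rfl, fun u hu => (hc u hu).trans hvw.le, ?_⟩
  by_contra hw
  exact (hc w (Finsupp.mem_support_iff.mpr hw)).not_gt hvw

theorem of_le {v w : FreeMonoid X} {r : R} {s : S} (hvw : v ≤ w)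
    (h : BoundedWithCoeff ι j v r s) : BoundedWithCoeff ι j w (Finsupp.single v r w) s := by
  rcases hvw.lt_or_eq with hlt | rfl
  · rw [Finsupp.single_eq_of_ne hlt.ne']
    exact h.of_lt hlt
  · rwa [Finsupp.single_eq_same]

theorem map {w w' : FreeMonoid X} {r : R} {s : S} (F : S →+ S) (g : R →+ R)
    (hF : ∀ v ≤ w, ∀ a : R,
      BoundedWithCoeff ι j w' (g (Finsupp.single v a w)) (F (ι a * FreeMonoid.lift j v)))
    (h : BoundedWithCoeff ι j w r s) : BoundedWithCoeff ι j w' (g r) (F s) := by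
  obtain ⟨c, rfl, hc, rfl⟩ := h
  induction c using Finsupp.induction with
  | zero => simpa using zero w'
  | single_add v a c hv ha ih =>
    rw [Finsupp.support_single_add hv ha] at hc
    have hvw := hc v (Finset.mem_cons_self v _)
    have hcw := fun u hu => hc u (Finset.mem_cons_of_mem hu)
    rw [map_add, map_add, Finsupp.add_apply, map_add, monomialSum_single]
    exact (hF v hvw a).add (ih hcw)

end BoundedWithCoeff

open BoundedWithCoeff

theorem BoundedWithCoeff.ι_mul {w : FreeMonoid X} {r : R} {s : S} (a : R)
    (h : BoundedWithCoeff ι j w r s) : BoundedWithCoeff ι j w (a * r) (ι a * s) := by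
  refine h.map (AddMonoidHom.mulLeft (ι a)) (AddMonoidHom.mulLeft a) fun v hv b => ?_
  have hcoeff : a * Finsupp.single v b w = Finsupp.single v (a * b) w := by
    by_cases hvw : v = w <;> simp [hvw]
  rw [AddMonoidHom.coe_mulLeft, AddMonoidHom.coe_mulLeft, hcoeff, ← mul_assoc, ← map_mul]
  exact (monomial v (a * b)).of_le hv

theorem mem_leadingCoeffSet_iff {A : Set S} {r : R} :
    r ∈ LeadingCoeffSet ι j A ↔ r ≠ 0 ∧ ∃ s ∈ A, ∃ w, BoundedWithCoeff ι j w r s := by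
  constructor
  · rintro ⟨s, hs, c, rfl, w, hw, hmax, rfl⟩
    exact ⟨Finsupp.mem_support_iff.mp hw, _, hs, w, c, (monomialSum_apply ι j c).symm, hmax, rfl⟩
  · rintro ⟨hr, s, hs, w, c, rfl, hmax, rfl⟩
    exact ⟨_, hs, c, monomialSum_apply ι j c, w, Finsupp.mem_support_iff.mpr hr, hmax, rfl⟩

theorem mul_mem_leadingCoeffSet (A : TwoSidedIdeal S) {r a : R}
    (hr : r ∈ LeadingCoeffSet ι j (A : Set S)) (ha : a * r ≠ 0) :
    a * r ∈ LeadingCoeffSet ι j (A : Set S) := by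
  obtain ⟨-, s, hs, w, h⟩ := mem_leadingCoeffSet_iff.mp hr
  exact mem_leadingCoeffSet_iff.mpr ⟨ha, _, A.mul_mem_left _ _ hs, w, h.ι_mul a⟩

section SkewRelation

variable {σ : X → R →+* R} {δ : X → R →+ R}
  (hlt : ∀ (x : X) (w : FreeMonoid X), w < FreeMonoid.of x * w)
  (hmul : ∀ u v w : FreeMonoid X, v < w → u * v < u * w)
  (hrel : ∀ (x : X) (r : R), j x * ι r = ι (σ x r) * j x + ι (δ x r))
include hlt hmul hrel

/-- In `x (a v) = σₓ(a) (x v) + δₓ(a) v` the `δₓ`-term stays below `w < x w`. -/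
theorem BoundedWithCoeff.generator_mul {w : FreeMonoid X} {r : R} {s : S} (x : X)
    (h : BoundedWithCoeff ι j w r s) :
    BoundedWithCoeff ι j (FreeMonoid.of x * w) (σ x r) (j x * s) := by
  refine h.map (AddMonoidHom.mulLeft (j x)) (σ x).toAddMonoidHom fun v hv a => ?_
  have hσ := (monomial (ι := ι) (j := j) (FreeMonoid.of x * v) (σ x a)).of_le
    (hv.lt_or_eq.elim (fun hvw => (hmul _ _ _ hvw).le) fun h => h ▸ le_rfl)
  have hδ := (monomial (ι := ι) (j := j) v (δ x a)).of_lt (hv.trans_lt (hlt x w))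
  have hcoeff : σ x (Finsupp.single v a w)
      = Finsupp.single (FreeMonoid.of x * v) (σ x a) (FreeMonoid.of x * w) + 0 := by
    rcases eq_or_ne v w with rfl | hne
    · simp
    · rw [Finsupp.single_eq_of_ne hne.symm,
        Finsupp.single_eq_of_ne fun h => hne (mul_left_cancel h).symm, map_zero, add_zero]
  have hxv : j x * FreeMonoid.lift j v = FreeMonoid.lift j (FreeMonoid.of x * v) := by
    rw [map_mul, FreeMonoid.lift_eval_of]
  rw [RingHom.toAddMonoidHom_eq_coe, AddMonoidHom.coe_coe, AddMonoidHom.coe_mulLeft, hcoeff,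
    ← mul_assoc, hrel, add_mul, mul_assoc, hxv]
  exact hσ.add hδ

theorem boundedWithCoeff_lift_mul_ι (w : FreeMonoid X) (b : R) :
    BoundedWithCoeff ι j w (FreeMonoid.lift σ w b) (FreeMonoid.lift j w * ι b) := by
  induction w using FreeMonoid.inductionOn' generalizing b with
  | one => simpa using monomial (ι := ι) (j := j) 1 b
  | of_mul x w ih =>
    rw [map_mul, map_mul, FreeMonoid.lift_eval_of, FreeMonoid.lift_eval_of, mul_assoc]
    exact (ih b).generator_mul hlt hmul hrel x

theorem BoundedWithCoeff.mul_ι {w : FreeMonoid X} {r : R} {s : S} (b : R)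
    (h : BoundedWithCoeff ι j w r s) :
    BoundedWithCoeff ι j w (r * FreeMonoid.lift σ w b) (s * ι b) := by
  refine h.map (AddMonoidHom.mulRight (ι b)) (AddMonoidHom.mulRight (FreeMonoid.lift σ w b))
    fun v hv a => ?_
  have hab := ((boundedWithCoeff_lift_mul_ι hlt hmul hrel v b).ι_mul a).of_le hv
  rw [← mul_assoc] at hab
  rcases hv.lt_or_eq with hlt | rfl
  · simpa [Finsupp.single_eq_of_ne hlt.ne'] using hab
  · simpa using hab

theorem mem_leadingCoeffSet_mul (hσ : ∀ x, Function.Surjective (σ x)) (A : TwoSidedIdeal S)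
    {r a : R} (hr : r ∈ LeadingCoeffSet ι j (A : Set S)) (ha : r * a ≠ 0) :
    r * a ∈ LeadingCoeffSet ι j (A : Set S) := by
  obtain ⟨-, s, hs, w, h⟩ := mem_leadingCoeffSet_iff.mp hr
  obtain ⟨b, rfl⟩ := FreeMonoid.lift_surjective_of_forall_surjective hσ w a
  exact mem_leadingCoeffSet_iff.mpr ⟨ha, _, A.mul_mem_right _ _ hs, w, h.mul_ι hlt hmul hrel b⟩

end SkewRelation

end BoundedWithCoeff

theorem stmt10_general {R : Type*} [Ring R]
    {X : Type*} [LinearOrder (FreeMonoid X)]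
    (hdeg : ∀ v w : FreeMonoid X, FreeMonoid.length v < FreeMonoid.length w → v < w)
    (hmul : ∀ u v w : FreeMonoid X, v < w → u * v < u * w ∧ v * u < w * u)
    (σ : X → R →+* R) (hσ : ∀ x, Function.Bijective (σ x)) (δ : X → R →+ R)
    {S : Type*} [Ring S] (ι : R →+* S) (j : X → S)
    (hS : IsFreeSkewExtension R X σ δ S ι j)
    (A : TwoSidedIdeal S)
    (I : AddSubgroup R) (hI : I = AddSubgroup.closure (LeadingCoeffSet ι j (A : Set S))) :
    ∀ r ∈ I, ∀ a : R, a * r ∈ I ∧ r * a ∈ I := by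
  obtain ⟨-, hrel, -⟩ := hS
  have hlt : ∀ (x : X) (w : FreeMonoid X), w < FreeMonoid.of x * w :=
    fun x w => hdeg _ _ (by simp)
  have hmul_left : ∀ u v w : FreeMonoid X, v < w → u * v < u * w :=
    fun u v w hvw => (hmul u v w hvw).1
  subst hI
  intro r hr a
  exact ⟨AddSubgroup.apply_mem_closure (AddMonoidHom.mulLeft a)
      (fun t ht => (eq_or_ne (a * t) 0).imp_right (mul_mem_leadingCoeffSet A ht)) hr,
    AddSubgroup.apply_mem_closure (AddMonoidHom.mulRight a)
      (fun t ht => (eq_or_ne (t * a) 0).imp_right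
        (mem_leadingCoeffSet_mul hlt hmul_left hrel (fun x => (hσ x).surjective) A ht)) hr⟩

/-- let `R` be semiprime left Goldie, `S = R[X; 𝒢, 𝒟]` a free skew
extension with all `σₓ` automorphisms, `≤` a monomial order on `⟨X⟩` refining degree and
compatible with multiplication, `A` a nonzero two-sided ideal of `S`, and `I` the additive
subgroup of `R` generated by the leading coefficients of nonzero elements of `A`. Then `I`
is a two-sided ideal of `R`. -/
theorem stmt10 {R : Type*} [Ring R] (hsp : IsSemiprimeRing R) (hG : IsLeftGoldie R)
    {X : Type*} [LinearOrder (FreeMonoid X)]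
    (hdeg : ∀ v w : FreeMonoid X, FreeMonoid.length v < FreeMonoid.length w → v < w)
    (hmul : ∀ u v w : FreeMonoid X, v < w → u * v < u * w ∧ v * u < w * u)
    (σ : X → R →+* R) (hσ : ∀ x, Function.Bijective (σ x)) (δ : X → R →+ R)
    (hδ : ∀ x, IsSkewDerivation (σ x) (δ x))
    {S : Type*} [Ring S] (ι : R →+* S) (j : X → S)
    (hS : IsFreeSkewExtension R X σ δ S ι j)
    (A : TwoSidedIdeal S) (hA : A ≠ ⊥)
    (I : AddSubgroup R) (hI : I = AddSubgroup.closure (LeadingCoeffSet ι j (A : Set S))) :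
    ∀ r ∈ I, ∀ a : R, a * r ∈ I ∧ r * a ∈ I :=
  stmt10_general hdeg hmul σ hσ δ ι j hS A I hI
end
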